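/- arXiv:2306.06292 — 2 statements merged into one kernel-verified Lean document; each statement's English description precedes it below -/
import Mathlib

section
/- Let U, V, W be finite-dimensional real inner product spaces and let g : U → V and f : V → W be linear maps with f ∘ g = 0. Define Δ = g ∘ g* + f* ∘ f : V → V. Then dim ker Δ = dim ker f − dim range g; that is, the dimension of the harmonic space of Δ equals the dimension of the homology group ker f / range g. -/
/-!
Since `⟪Δ v, v⟫ = ‖g* v‖² + ‖f v‖²`, the harmonic space `ker Δ` is `ker g* ⊓ ker f`,
i.e. the orthogonal complement `(range g)ᗮ ⊓ ker f` of `range g` inside `ker f`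
(here `f ∘ g = 0` gives `range g ≤ ker f`), so its dimension is `dim ker f - dim range g`.
-/

namespace LinearMap

variable {𝕜 U V W : Type*} [RCLike 𝕜]
  [NormedAddCommGroup U] [InnerProductSpace 𝕜 U] [FiniteDimensional 𝕜 U]
  [NormedAddCommGroup V] [InnerProductSpace 𝕜 V] [FiniteDimensional 𝕜 V]
  [NormedAddCommGroup W] [InnerProductSpace 𝕜 W] [FiniteDimensional 𝕜 W]

theorem ker_comp_adjoint_add_adjoint_comp (g : U →ₗ[𝕜] V) (f : V →ₗ[𝕜] W) :
    ker (g ∘ₗ g.adjoint + f.adjoint ∘ₗ f) = ker g.adjoint ⊓ ker f := by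
  refine le_antisymm (fun v hv => ?_) (fun v ⟨hg, hf⟩ => by simp_all)
  have hsum : RCLike.re (inner 𝕜 ((g ∘ₗ g.adjoint + f.adjoint ∘ₗ f) v) v) =
      ‖g.adjoint v‖ ^ 2 + ‖f v‖ ^ 2 := by
    rw [add_apply, comp_apply, comp_apply, inner_add_left, ← adjoint_inner_right g,
      adjoint_inner_left f, map_add, inner_self_eq_norm_sq, inner_self_eq_norm_sq]
  rw [mem_ker.mp hv, inner_zero_left, map_zero, eq_comm,
    add_eq_zero_iff_of_nonneg (by positivity) (by positivity)] at hsum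
  simpa using hsum

end LinearMap

/-- For linear maps `g : U → V` and `f : V → W` between finite-dimensional real inner
product spaces with `f ∘ g = 0`, the harmonic space of the Laplacian `Δ = g g* + f* f`
has dimension `dim ker f - dim range g`, the dimension of the homology `ker f / range g`. -/
theorem laplacian_ker_finrank (U V W : Type*)
    [NormedAddCommGroup U] [InnerProductSpace ℝ U] [FiniteDimensional ℝ U]
    [NormedAddCommGroup V] [InnerProductSpace ℝ V] [FiniteDimensional ℝ V]
    [NormedAddCommGroup W] [InnerProductSpace ℝ W] [FiniteDimensional ℝ W]
    (g : U →ₗ[ℝ] V) (f : V →ₗ[ℝ] W) (h : f ∘ₗ g = 0)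
    (Δ : V →ₗ[ℝ] V)
    (hΔ : Δ = g ∘ₗ LinearMap.adjoint g + LinearMap.adjoint f ∘ₗ f) :
    Module.finrank ℝ (LinearMap.ker Δ) =
      Module.finrank ℝ (LinearMap.ker f) - Module.finrank ℝ (LinearMap.range g) := by
  rw [hΔ, LinearMap.ker_comp_adjoint_add_adjoint_comp, ← LinearMap.orthogonal_range]
  have := Submodule.finrank_add_inf_finrank_orthogonal (LinearMap.range_le_ker_iff.mpr h)
  omega
end

section
/- Let X be a real m×n matrix, L a real symmetric n×n matrix, γ ∈ ℝ, and Q a real n×k matrix with Qᵀ Q = I_k. Then the minimum over all real m×k matrices U of ‖X − U Qᵀ‖_F² + γ tr(Qᵀ L Q) equals tr(Qᵀ (γ L − Xᵀ X) Q) + ‖X‖_F². Consequently, minimizing ‖X − U Qᵀ‖_F² + γ tr(Qᵀ L Q) jointly over U and over Q with Qᵀ Q = I_k is equivalent to minimizing tr(Qᵀ (γ L − Xᵀ X) Q) over Q with Qᵀ Q = I_k. -/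
/-!
Completing the square in `U`: for `Qᵀ Q = I`,
`‖X - U Qᵀ‖_F² = ‖U - X Q‖_F² + ‖X‖_F² - tr (Qᵀ Xᵀ X Q)`,
so for fixed `Q` the objective is minimized exactly at `U = X Q`, with value
`tr (Qᵀ (γ L - Xᵀ X) Q) + ‖X‖_F²`. A joint minimizer therefore sits at a minimizer of this
reduced value, and conversely.
-/

open Matrix

/-- The squared Frobenius norm `‖A‖_F² = ∑ i, ∑ j, (A i j)²` of a real matrix. -/
def frobSq {m n : ℕ} (A : Matrix (Fin m) (Fin n) ℝ) : ℝ := ∑ i, ∑ j, (A i j) ^ 2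

lemma exists_forall_le_iff_of_isLeast_range {α β R : Type*} [Preorder R] {P : β → Prop}
    {f : α → β → R} {g : β → R} (hfg : ∀ b, P b → IsLeast (Set.range (f · b)) (g b))
    {b : β} (hb : P b) :
    (∃ a, ∀ a' b', P b' → f a b ≤ f a' b') ↔ ∀ b', P b' → g b ≤ g b' := by
  constructor
  · rintro ⟨a, ha⟩ b' hb'
    obtain ⟨⟨a', ha'⟩, -⟩ := hfg b' hb'
    calc g b ≤ f a b := (hfg b hb).2 ⟨a, rfl⟩
      _ ≤ f a' b' := ha a' b' hb'
      _ = g b' := ha'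
  · intro h
    obtain ⟨⟨a, ha⟩, -⟩ := hfg b hb
    refine ⟨a, fun a' b' hb' => ?_⟩
    calc f a b = g b := ha
      _ ≤ g b' := h b' hb'
      _ ≤ f a' b' := (hfg b' hb').2 ⟨a', rfl⟩

lemma frobSq_eq_trace {m n : ℕ} (A : Matrix (Fin m) (Fin n) ℝ) :
    frobSq A = (Aᵀ * A).trace := by
  simp only [frobSq, trace, diag, mul_apply, transpose_apply, sq]
  exact Finset.sum_comm

lemma frobSq_nonneg {m n : ℕ} (A : Matrix (Fin m) (Fin n) ℝ) : 0 ≤ frobSq A :=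
  Finset.sum_nonneg fun _ _ => Finset.sum_nonneg fun _ _ => sq_nonneg _

lemma frobSq_zero {m n : ℕ} : frobSq (0 : Matrix (Fin m) (Fin n) ℝ) = 0 := by
  simp [frobSq]

lemma frobSq_sub_mul_transpose_add {m n k : ℕ} (X : Matrix (Fin m) (Fin n) ℝ)
    (U : Matrix (Fin m) (Fin k) ℝ) {Q : Matrix (Fin n) (Fin k) ℝ} (hQ : Qᵀ * Q = 1) :
    frobSq (X - U * Qᵀ) + (Qᵀ * (Xᵀ * X) * Q).trace = frobSq (U - X * Q) + frobSq X := by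
  have hUU : (Q * (Uᵀ * (U * Qᵀ))).trace = (Uᵀ * U).trace := by
    rw [← Matrix.mul_assoc, trace_mul_cycle, Matrix.mul_assoc U, hQ, Matrix.mul_one,
      trace_mul_comm]
  have hXU : (Xᵀ * (U * Qᵀ)).trace = (Qᵀ * (Xᵀ * U)).trace := by
    rw [← Matrix.mul_assoc, trace_mul_comm]
  have hUX : (Q * (Uᵀ * X)).trace = (Qᵀ * (Xᵀ * U)).trace := by
    rw [← trace_transpose]; simpa [Matrix.mul_assoc] using hXU
  have hUX' : (Uᵀ * (X * Q)).trace = (Qᵀ * (Xᵀ * U)).trace := by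
    rw [← trace_transpose]; simp [Matrix.mul_assoc]
  simp only [frobSq_eq_trace, transpose_sub, transpose_mul, transpose_transpose,
    Matrix.sub_mul, Matrix.mul_sub, trace_sub, Matrix.mul_assoc]
  rw [hUU, hXU, hUX, hUX']
  ring

section Objective

variable {m n k : ℕ} (X : Matrix (Fin m) (Fin n) ℝ) (L : Matrix (Fin n) (Fin n) ℝ) (γ : ℝ)

def glpcaObjective (U : Matrix (Fin m) (Fin k) ℝ) (Q : Matrix (Fin n) (Fin k) ℝ) : ℝ :=
  frobSq (X - U * Qᵀ) + γ * (Qᵀ * L * Q).trace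

def glpcaReducedObjective (Q : Matrix (Fin n) (Fin k) ℝ) : ℝ :=
  (Qᵀ * (γ • L - Xᵀ * X) * Q).trace

lemma glpcaObjective_eq (U : Matrix (Fin m) (Fin k) ℝ) {Q : Matrix (Fin n) (Fin k) ℝ}
    (hQ : Qᵀ * Q = 1) :
    glpcaObjective X L γ U Q =
      frobSq (U - X * Q) + (glpcaReducedObjective X L γ Q + frobSq X) := by
  have h := frobSq_sub_mul_transpose_add X U hQ
  simp only [glpcaObjective, glpcaReducedObjective, Matrix.mul_sub, Matrix.sub_mul,
    Matrix.mul_smul, Matrix.smul_mul, trace_sub, trace_smul, smul_eq_mul]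
  linarith

lemma isLeast_range_glpcaObjective {Q : Matrix (Fin n) (Fin k) ℝ} (hQ : Qᵀ * Q = 1) :
    IsLeast (Set.range fun U : Matrix (Fin m) (Fin k) ℝ => glpcaObjective X L γ U Q)
      (glpcaReducedObjective X L γ Q + frobSq X) := by
  refine ⟨⟨X * Q, ?_⟩, ?_⟩
  · dsimp only
    rw [glpcaObjective_eq X L γ _ hQ, sub_self, frobSq_zero, zero_add]
  · rintro _ ⟨U, rfl⟩
    dsimp only
    rw [glpcaObjective_eq X L γ U hQ]
    exact le_add_of_nonneg_left (frobSq_nonneg _)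

end Objective

theorem glpca_reduction_general (m n k : ℕ)
    (X : Matrix (Fin m) (Fin n) ℝ) (L : Matrix (Fin n) (Fin n) ℝ)
    (γ : ℝ) :
    (∀ Q : Matrix (Fin n) (Fin k) ℝ, Qᵀ * Q = 1 →
      IsLeast {x : ℝ | ∃ U : Matrix (Fin m) (Fin k) ℝ,
          x = frobSq (X - U * Qᵀ) + γ * (Qᵀ * L * Q).trace}
        ((Qᵀ * (γ • L - Xᵀ * X) * Q).trace + frobSq X)) ∧
    (∀ Q : Matrix (Fin n) (Fin k) ℝ, Qᵀ * Q = 1 →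
      ((∃ U : Matrix (Fin m) (Fin k) ℝ,
          ∀ (U' : Matrix (Fin m) (Fin k) ℝ) (Q' : Matrix (Fin n) (Fin k) ℝ), Q'ᵀ * Q' = 1 →
            frobSq (X - U * Qᵀ) + γ * (Qᵀ * L * Q).trace ≤
              frobSq (X - U' * Q'ᵀ) + γ * (Q'ᵀ * L * Q').trace) ↔
        (∀ Q' : Matrix (Fin n) (Fin k) ℝ, Q'ᵀ * Q' = 1 →
          (Qᵀ * (γ • L - Xᵀ * X) * Q).trace ≤ (Q'ᵀ * (γ • L - Xᵀ * X) * Q').trace))) := by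
  have hmin := fun (Q : Matrix (Fin n) (Fin k) ℝ) (hQ : Qᵀ * Q = 1) =>
    isLeast_range_glpcaObjective (m := m) X L γ hQ
  unfold glpcaObjective glpcaReducedObjective at hmin
  refine ⟨fun Q hQ => ?_, fun Q hQ => ?_⟩
  · simpa only [Set.range, eq_comm] using hmin Q hQ
  · simpa only [add_le_add_iff_right] using exists_forall_le_iff_of_isLeast_range hmin hQ

/-- For `Q` with orthonormal columns, the minimum over `U` of
`‖X - U Qᵀ‖_F² + γ tr (Qᵀ L Q)` equals `tr (Qᵀ (γ L - Xᵀ X) Q) + ‖X‖_F²`; consequently,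
joint minimization of the gLPCA objective over `(U, Q)` with `Qᵀ Q = I` is equivalent to
minimizing `tr (Qᵀ (γ L - Xᵀ X) Q)` over `Q` with `Qᵀ Q = I`. -/
theorem glpca_reduction (m n k : ℕ)
    (X : Matrix (Fin m) (Fin n) ℝ) (L : Matrix (Fin n) (Fin n) ℝ) (hL : L.IsSymm)
    (γ : ℝ) :
    (∀ Q : Matrix (Fin n) (Fin k) ℝ, Qᵀ * Q = 1 →
      IsLeast {x : ℝ | ∃ U : Matrix (Fin m) (Fin k) ℝ,
          x = frobSq (X - U * Qᵀ) + γ * (Qᵀ * L * Q).trace}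
        ((Qᵀ * (γ • L - Xᵀ * X) * Q).trace + frobSq X)) ∧
    (∀ Q : Matrix (Fin n) (Fin k) ℝ, Qᵀ * Q = 1 →
      ((∃ U : Matrix (Fin m) (Fin k) ℝ,
          ∀ (U' : Matrix (Fin m) (Fin k) ℝ) (Q' : Matrix (Fin n) (Fin k) ℝ), Q'ᵀ * Q' = 1 →
            frobSq (X - U * Qᵀ) + γ * (Qᵀ * L * Q).trace ≤
              frobSq (X - U' * Q'ᵀ) + γ * (Q'ᵀ * L * Q').trace) ↔
        (∀ Q' : Matrix (Fin n) (Fin k) ℝ, Q'ᵀ * Q' = 1 →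
          (Qᵀ * (γ • L - Xᵀ * X) * Q).trace ≤ (Q'ᵀ * (γ • L - Xᵀ * X) * Q').trace))) :=
  glpca_reduction_general m n k X L γ
end
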